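/- Let $(\Omega_1, \mathcal{A}_1, \mathbb{P}_1)$ and $(\Omega_2, \mathcal{A}_2, \mathbb{P}_2)$ be probability spaces with $\mathbb{P} = \mathbb{P}_1 \times \mathbb{P}_2$, and let $\mathcal{G}_1 \subseteq \mathcal{A}_1$, $\mathcal{G}_2 \subseteq \mathcal{A}_2$ be sub-$\sigma$-algebras. For any integrable random variable $Y$ on the product space, the conditional expectation satisfies the iterated formula $\mathbb{E}[Y \mid \mathcal{G}_1 \otimes \mathcal{G}_2] = \mathbb{E}_1[\mathbb{E}_2[Y \mid \mathcal{G}_2] \mid \mathcal{G}_1]$ almost surely, where $\mathbb{E}_2[\cdot \mid \mathcal{G}_2]$ denotes conditional expectation in the second variable only (treating the first as a parameter) and $\mathbb{E}_1$ analogously. -/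

import Mathlib

/-!
Write `𝒢 = 𝒢₁ ⊗ 𝒢₂`, `ℋ = 𝒜₁ ⊗ 𝒢₂` and `𝒦 = 𝒢₁ ⊗ 𝒜₂`; conditioning "in the second variable
only" is conditioning on `ℋ`, and `E₁[· | 𝒢₁]` is conditioning on `𝒦`. The heart of the matter is
that `ℋ` and `𝒦` are conditionally independent given `𝒢`: `E[1_s | ℋ] = E[1_s | 𝒢]` for `s ∈ 𝒦`.
On a rectangle `A × B` both sides are `1_A ⊗ E₂[1_B | 𝒢₂]`, because conditioning a tensor product
`u ⊗ v` on a product σ-algebra conditions each factor separately; a π-λ argument extends this to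
all of `𝒦`. Self-adjointness of conditional expectation then gives, for `s ∈ 𝒦`,
`∫_s E[Y | 𝒢] = ∫ Y E[1_s | 𝒢] = ∫ Y E[1_s | ℋ] = ∫_s E[Y | ℋ]`, so the `𝒦`-measurable function
`E[Y | 𝒢]` is `E[E[Y | ℋ] | 𝒦]`.
-/

open Set

theorem MeasurableSpace.prod_mono {Ω₁ Ω₂ : Type*} {a₁ b₁ : MeasurableSpace Ω₁}
    {a₂ b₂ : MeasurableSpace Ω₂} (h₁ : a₁ ≤ b₁) (h₂ : a₂ ≤ b₂) : a₁.prod a₂ ≤ b₁.prod b₂ :=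
  sup_le_sup (MeasurableSpace.comap_mono h₁) (MeasurableSpace.comap_mono h₂)

namespace MeasureTheory

section General

variable {α : Type*} {m m0 : MeasurableSpace α} {μ : Measure α}

theorem setIntegral_eq_setIntegral_of_isPiSystem {E : Type*} [NormedAddCommGroup E]
    [NormedSpace ℝ E] (hm : m ≤ m0) {S : Set (Set α)} (h_eq : m = MeasurableSpace.generateFrom S)
    (h_inter : IsPiSystem S) (h_univ : univ ∈ S) {f g : α → E} (hf : Integrable f μ)
    (hg : Integrable g μ) (basic : ∀ t ∈ S, ∫ x in t, f x ∂μ = ∫ x in t, g x ∂μ) {t : Set α}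
    (ht : MeasurableSet[m] t) : ∫ x in t, f x ∂μ = ∫ x in t, g x ∂μ := by
  have h_whole : ∫ x, f x ∂μ = ∫ x, g x ∂μ := by simpa using basic univ h_univ
  induction t, ht using MeasurableSpace.induction_on_inter h_eq h_inter with
  | empty => simp
  | basic t ht => exact basic t ht
  | compl t ht h => rw [setIntegral_compl (hm t ht) hf, setIntegral_compl (hm t ht) hg, h, h_whole]
  | iUnion t hdisj ht h =>
    rw [integral_iUnion (fun i => hm _ (ht i)) hdisj hf.integrableOn,
      integral_iUnion (fun i => hm _ (ht i)) hdisj hg.integrableOn]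
    exact tsum_congr h

theorem integrable_indicator_one [IsFiniteMeasure μ] {s : Set α} (hs : MeasurableSet s) :
    Integrable (s.indicator (1 : α → ℝ)) μ :=
  (integrable_const 1).indicator hs

theorem ae_abs_condExp_indicator_one_le_one [IsFiniteMeasure μ] (s : Set α) :
    ∀ᵐ x ∂μ, |μ[s.indicator (1 : α → ℝ) | m] x| ≤ 1 :=
  ae_bdd_abs_condExp_of_ae_bdd_abs <| .of_forall fun x => by
    by_cases hx : x ∈ s <;> simp [hx]

theorem setIntegral_condExp_eq_integral_mul_condExp_indicator (hm : m ≤ m0) [IsFiniteMeasure μ]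
    {f : α → ℝ} (hf : Integrable f μ) {s : Set α} (hs : MeasurableSet s) :
    ∫ x in s, μ[f | m] x ∂μ = ∫ x, f x * μ[s.indicator (1 : α → ℝ) | m] x ∂μ := by
  set k := μ[s.indicator (1 : α → ℝ) | m]
  have hk : Integrable (k * f) μ :=
    hf.bdd_mul (stronglyMeasurable_condExp.mono hm).aestronglyMeasurable
      ((ae_abs_condExp_indicator_one_le_one s).mono fun _ hx => by rwa [Real.norm_eq_abs])
  have hmul : μ[f | m] * s.indicator 1 = s.indicator μ[f | m] := by
    ext x
    by_cases hx : x ∈ s <;> simp [hx]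
  calc ∫ x in s, μ[f | m] x ∂μ = ∫ x, (μ[f | m] * s.indicator (1 : α → ℝ)) x ∂μ := by
        rw [hmul, integral_indicator hs]
    _ = ∫ x, (μ[f | m] * k) x ∂μ := by
        rw [← integral_condExp hm]
        exact integral_congr_ae (condExp_mul_of_stronglyMeasurable_left stronglyMeasurable_condExp
          (hmul ▸ integrable_condExp.indicator hs) (integrable_indicator_one hs))
    _ = ∫ x, (k * f) x ∂μ := by
        rw [← integral_condExp hm (f := k * f), mul_comm]
        exact (integral_congr_ae
          (condExp_mul_of_stronglyMeasurable_left stronglyMeasurable_condExp hk hf)).symm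
    _ = ∫ x, f x * k x ∂μ := by simp only [Pi.mul_apply, mul_comm]

theorem setIntegral_condExp_indicator_comm (hm : m ≤ m0) [IsFiniteMeasure μ] {s t : Set α}
    (hs : MeasurableSet s) (ht : MeasurableSet t) :
    ∫ x in t, μ[s.indicator (1 : α → ℝ) | m] x ∂μ = ∫ x in s, μ[t.indicator 1 | m] x ∂μ := by
  rw [setIntegral_condExp_eq_integral_mul_condExp_indicator hm
    (integrable_indicator_one hs) ht, ← integral_indicator hs]
  congr with x
  by_cases hx : x ∈ s <;> simp [hx]

end General

section Product

variable {Ω₁ Ω₂ : Type*} {g₁ m₁ : MeasurableSpace Ω₁} {g₂ m₂ : MeasurableSpace Ω₂}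
  {P₁ : Measure Ω₁} {P₂ : Measure Ω₂} [IsFiniteMeasure P₁] [IsFiniteMeasure P₂]

theorem condExp_prod_mul (hg₁ : g₁ ≤ m₁) (hg₂ : g₂ ≤ m₂) {u : Ω₁ → ℝ} {v : Ω₂ → ℝ}
    (hu : Integrable u P₁) (hv : Integrable v P₂) :
    (P₁.prod P₂)[fun ω => u ω.1 * v ω.2 | g₁.prod g₂]
      =ᵐ[P₁.prod P₂] fun ω => P₁[u | g₁] ω.1 * P₂[v | g₂] ω.2 := by
  have hg := MeasurableSpace.prod_mono hg₁ hg₂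
  have hcond : Integrable (fun ω : Ω₁ × Ω₂ => P₁[u | g₁] ω.1 * P₂[v | g₂] ω.2) (P₁.prod P₂) :=
    integrable_condExp.mul_prod integrable_condExp
  refine (ae_eq_condExp_of_forall_setIntegral_eq hg (hu.mul_prod hv)
    (fun _ _ _ => hcond.integrableOn) (fun t ht _ => ?_) ?_).symm
  · refine setIntegral_eq_setIntegral_of_isPiSystem hg
      (@generateFrom_prod _ _ g₁ g₂).symm (@isPiSystem_prod _ _ g₁ g₂)
      ⟨univ, .univ, univ, .univ, univ_prod_univ⟩ hcond (hu.mul_prod hv) ?_ ht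
    rintro _ ⟨A, hA, B, hB, rfl⟩
    rw [setIntegral_prod_mul, setIntegral_prod_mul, setIntegral_condExp hg₁ hu hA,
      setIntegral_condExp hg₂ hv hB]
  · exact ((stronglyMeasurable_condExp.comp_measurable (@measurable_fst _ _ g₁ g₂)).mul
      (stronglyMeasurable_condExp.comp_measurable (@measurable_snd _ _ g₁ g₂))).aestronglyMeasurable

theorem condExp_indicator_prod_eq (hg₁ : g₁ ≤ m₁) (hg₂ : g₂ ≤ m₂) {A : Set Ω₁}
    (hA : MeasurableSet[g₁] A) {B : Set Ω₂} (hB : MeasurableSet B) :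
    (P₁.prod P₂)[(A ×ˢ B).indicator (1 : Ω₁ × Ω₂ → ℝ) | g₁.prod g₂]
      =ᵐ[P₁.prod P₂] (P₁.prod P₂)[(A ×ˢ B).indicator 1 | m₁.prod g₂] := by
  have hAm : StronglyMeasurable[g₁] (A.indicator (1 : Ω₁ → ℝ)) :=
    stronglyMeasurable_const.indicator hA
  have hAi : Integrable (A.indicator (1 : Ω₁ → ℝ)) P₁ := integrable_indicator_one (hg₁ _ hA)
  have hBi : Integrable (B.indicator (1 : Ω₂ → ℝ)) P₂ := integrable_indicator_one hB
  have h_rect : (A ×ˢ B).indicator (1 : Ω₁ × Ω₂ → ℝ)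
      = fun ω => A.indicator 1 ω.1 * B.indicator 1 ω.2 := funext fun _ => indicator_prod_one
  rw [h_rect]
  calc (P₁.prod P₂)[fun ω => A.indicator 1 ω.1 * B.indicator 1 ω.2 | g₁.prod g₂]
      =ᵐ[P₁.prod P₂] fun ω => P₁[A.indicator 1 | g₁] ω.1 * P₂[B.indicator 1 | g₂] ω.2 :=
        condExp_prod_mul hg₁ hg₂ hAi hBi
    _ = fun ω => P₁[A.indicator 1 | m₁] ω.1 * P₂[B.indicator 1 | g₂] ω.2 := by
        rw [condExp_of_stronglyMeasurable hg₁ hAm hAi,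
          condExp_of_stronglyMeasurable le_rfl (hAm.mono hg₁) hAi]
    _ =ᵐ[P₁.prod P₂] _ := (condExp_prod_mul le_rfl hg₂ hAi hBi).symm

theorem condExp_indicator_eq_of_measurableSet_prod (hg₁ : g₁ ≤ m₁) (hg₂ : g₂ ≤ m₂)
    {s : Set (Ω₁ × Ω₂)} (hs : MeasurableSet[g₁.prod m₂] s) :
    (P₁.prod P₂)[s.indicator (1 : Ω₁ × Ω₂ → ℝ) | g₁.prod g₂]
      =ᵐ[P₁.prod P₂] (P₁.prod P₂)[s.indicator 1 | m₁.prod g₂] := by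
  have hG := MeasurableSpace.prod_mono hg₁ hg₂
  have hH := MeasurableSpace.prod_mono (le_refl m₁) hg₂
  have hK := MeasurableSpace.prod_mono hg₁ (le_refl m₂)
  refine ae_eq_condExp_of_forall_setIntegral_eq hH (integrable_indicator_one (hK _ hs))
    (fun _ _ _ => integrable_condExp.integrableOn) (fun t ht _ => ?_)
    (stronglyMeasurable_condExp.mono (MeasurableSpace.prod_mono hg₁ le_rfl)).aestronglyMeasurable
  have ht' : MeasurableSet t := hH _ ht
  have swap_indicator : ∀ {a b : Set (Ω₁ × Ω₂)}, MeasurableSet a → MeasurableSet b →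
      ∫ x in a, b.indicator (1 : Ω₁ × Ω₂ → ℝ) x ∂(P₁.prod P₂)
        = ∫ x in b, a.indicator 1 x ∂(P₁.prod P₂) := fun ha hb => by
    rw [setIntegral_indicator hb, setIntegral_indicator ha, inter_comm]
  -- By symmetry the claim becomes an identity of set integrals over `s`, to which π-λ applies.
  rw [setIntegral_condExp_indicator_comm hG (hK _ hs) ht', swap_indicator ht' (hK _ hs)]
  refine setIntegral_eq_setIntegral_of_isPiSystem hK
    (@generateFrom_prod _ _ g₁ m₂).symm (@isPiSystem_prod _ _ g₁ m₂)
    ⟨univ, .univ, univ, .univ, univ_prod_univ⟩ integrable_condExp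
    (integrable_indicator_one ht') ?_ hs
  rintro _ ⟨A, hA, B, hB, rfl⟩
  have hAB : MeasurableSet (A ×ˢ B) := (hg₁ _ hA).prod hB
  rw [← setIntegral_condExp_indicator_comm hG hAB ht',
    integral_congr_ae (ae_restrict_of_ae (condExp_indicator_prod_eq hg₁ hg₂ hA hB)),
    setIntegral_condExp hH (integrable_indicator_one hAB) ht, swap_indicator ht' hAB]

end Product

end MeasureTheory

open MeasureTheory

/-- Iterated conditional expectation on a product probability space:
`E[Y | 𝒢₁ ⊗ 𝒢₂] = E₁[E₂[Y | 𝒢₂] | 𝒢₁]` a.s., where conditioning "in the second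
variable only" is conditioning on `𝒜₁ ⊗ 𝒢₂`, and applying `E₁[· | 𝒢₁]` afterwards
is conditioning on `𝒢₁ ⊗ 𝒜₂`. -/
theorem stmt2 {Ω₁ Ω₂ : Type*} (g₁ : MeasurableSpace Ω₁) (g₂ : MeasurableSpace Ω₂)
    {m₁ : MeasurableSpace Ω₁} {m₂ : MeasurableSpace Ω₂}
    (P₁ : Measure Ω₁) (P₂ : Measure Ω₂)
    [IsProbabilityMeasure P₁] [IsProbabilityMeasure P₂]
    (hg₁ : g₁ ≤ m₁) (hg₂ : g₂ ≤ m₂)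
    (Y : Ω₁ × Ω₂ → ℝ) (hY : Integrable Y (P₁.prod P₂)) :
    (P₁.prod P₂)[Y | g₁.prod g₂]
      =ᵐ[P₁.prod P₂] (P₁.prod P₂)[(P₁.prod P₂)[Y | m₁.prod g₂] | g₁.prod m₂] := by
  have hG := MeasurableSpace.prod_mono hg₁ hg₂
  have hH := MeasurableSpace.prod_mono (le_refl m₁) hg₂
  have hK := MeasurableSpace.prod_mono hg₁ (le_refl m₂)
  refine ae_eq_condExp_of_forall_setIntegral_eq hK integrable_condExp
    (fun _ _ _ => integrable_condExp.integrableOn) (fun s hs _ => ?_)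
    (stronglyMeasurable_condExp.mono (MeasurableSpace.prod_mono le_rfl hg₂)).aestronglyMeasurable
  have hs' : MeasurableSet s := hK _ hs
  calc ∫ x in s, (P₁.prod P₂)[Y | g₁.prod g₂] x ∂(P₁.prod P₂)
      = ∫ x, Y x * (P₁.prod P₂)[s.indicator 1 | g₁.prod g₂] x ∂(P₁.prod P₂) :=
        setIntegral_condExp_eq_integral_mul_condExp_indicator hG hY hs'
    _ = ∫ x, Y x * (P₁.prod P₂)[s.indicator 1 | m₁.prod g₂] x ∂(P₁.prod P₂) :=
        integral_congr_ae ((condExp_indicator_eq_of_measurableSet_prod hg₁ hg₂ hs).mono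
          fun x hx => congrArg (Y x * ·) hx)
    _ = ∫ x in s, (P₁.prod P₂)[Y | m₁.prod g₂] x ∂(P₁.prod P₂) :=
        (setIntegral_condExp_eq_integral_mul_condExp_indicator hH hY hs').symm
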